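/- arXiv:2509.22618 — 4 statements merged into one kernel-verified Lean document; each statement's English description precedes it below -/
import Mathlib

section
/- For every positive integer n, n · N^q_A(n) = Σ_{k=1}^{n−1} N^q_A(k) · σ^s_A(n−k) + Σ_{t=1}^{n} t · τ^s_A(t) · q_A(n−t), where N^q_A(k) is the total number of parts over partitions of k into distinct parts from A, σ^s_A(m) = Σ_{a∈A, a∣m} (−1)^{m/a−1} a, τ^s_A(m) = Σ_{a∈A, a∣m} (−1)^{m/a−1}, and q_A(m) is the number of partitions of m into distinct parts from A with q_A(0)=1. -/
open scoped Classical
open Finset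

/-- Total number of parts over all partitions of `n` with parts from `A`. -/
noncomputable def NpA (A : Set ℕ) (n : ℕ) : ℕ :=
  ∑ p : n.Partition, if ∀ x ∈ p.parts, x ∈ A then p.parts.card else 0

/-- Number of partitions of `n` with parts from `A`. -/
noncomputable def pA (A : Set ℕ) (n : ℕ) : ℕ :=
  ∑ p : n.Partition, if ∀ x ∈ p.parts, x ∈ A then 1 else 0

/-- Total number of parts over all partitions of `n` into distinct parts from `A`. -/
noncomputable def NqA (A : Set ℕ) (n : ℕ) : ℕ :=
  ∑ p : n.Partition, if (∀ x ∈ p.parts, x ∈ A) ∧ p.parts.Nodup then p.parts.card else 0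

/-- Number of partitions of `n` into distinct parts from `A`. -/
noncomputable def qA (A : Set ℕ) (n : ℕ) : ℕ :=
  ∑ p : n.Partition, if (∀ x ∈ p.parts, x ∈ A) ∧ p.parts.Nodup then 1 else 0

/-- Number of divisors of `m` lying in `A`. -/
noncomputable def tauA (A : Set ℕ) (m : ℕ) : ℕ :=
  (m.divisors.filter (· ∈ A)).card

/-- Sum of divisors of `m` lying in `A`. -/
noncomputable def sigmaA (A : Set ℕ) (m : ℕ) : ℕ :=
  ∑ a ∈ m.divisors.filter (· ∈ A), a

/-- Signed divisor count `τ^s_A(m) = Σ_{a ∈ A, a ∣ m} (-1)^(m/a - 1)`. -/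
noncomputable def tauSA (A : Set ℕ) (m : ℕ) : ℤ :=
  ∑ a ∈ m.divisors.filter (· ∈ A), (-1 : ℤ) ^ (m / a - 1)

/-- Signed divisor sum `σ^s_A(m) = Σ_{a ∈ A, a ∣ m} (-1)^(m/a - 1) a`. -/
noncomputable def sigmaSA (A : Set ℕ) (m : ℕ) : ℤ :=
  ∑ a ∈ m.divisors.filter (· ∈ A), (-1 : ℤ) ^ (m / a - 1) * (a : ℤ)

/-- Number of partitions of `n` into an even number of distinct parts from `A`. -/
noncomputable def qeA (A : Set ℕ) (n : ℕ) : ℕ :=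
  ∑ p : n.Partition,
    if (∀ x ∈ p.parts, x ∈ A) ∧ p.parts.Nodup ∧ Even p.parts.card then 1 else 0

/-- Number of partitions of `n` into an odd number of distinct parts from `A`. -/
noncomputable def qoA (A : Set ℕ) (n : ℕ) : ℕ :=
  ∑ p : n.Partition,
    if (∀ x ∈ p.parts, x ∈ A) ∧ p.parts.Nodup ∧ Odd p.parts.card then 1 else 0

/-- Number of partitions of `n` into an even number of parts from `A`. -/
noncomputable def peA (A : Set ℕ) (n : ℕ) : ℕ :=
  ∑ p : n.Partition, if (∀ x ∈ p.parts, x ∈ A) ∧ Even p.parts.card then 1 else 0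

/-- Number of partitions of `n` into an odd number of parts from `A`. -/
noncomputable def poA (A : Set ℕ) (n : ℕ) : ℕ :=
  ∑ p : n.Partition, if (∀ x ∈ p.parts, x ∈ A) ∧ Odd p.parts.card then 1 else 0

/-- Hamming weight: number of ones in the binary expansion of `n`. -/
def hw (n : ℕ) : ℕ := (Nat.digits 2 n).sum

/-- Number of Carlitz compositions of `m` with parts from `A`
(sequences of elements of `A` summing to `m` with no two adjacent parts equal). -/
noncomputable def clA (A : Set ℕ) (m : ℕ) : ℕ :=
  Nat.card {l : List ℕ // (∀ x ∈ l, x ∈ A) ∧ l.sum = m ∧ l.Chain' (· ≠ ·)}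

/-- The set of powers of two. -/
def binA : Set ℕ := {m | ∃ j : ℕ, m = 2 ^ j}

/-- Pentagonal-number weight: `ω(0)=1`, `ω(j(3j±1)/2)=(-1)^j` for `j ≥ 1`, else `0`. -/
def omegaP (m : ℕ) : ℤ :=
  if m = 0 then 1
  else ∑ j ∈ Finset.range (m + 1),
    if 2 * m = j * (3 * j + 1) ∨ 2 * m = j * (3 * j - 1) then (-1 : ℤ) ^ j else 0


namespace Stmt14Aux

open scoped Classical
open Finset

variable (A : Set ℕ)

/-- Distinct `A`-partitions of `n`. -/
noncomputable def D (n : ℕ) : Finset n.Partition :=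
  Finset.univ.filter fun p => (∀ x ∈ p.parts, x ∈ A) ∧ p.parts.Nodup

lemma qA_eq (n : ℕ) : qA A n = (D A n).card := by
  rw [qA, D, Finset.card_filter]

lemma NqA_eq (n : ℕ) : NqA A n = ∑ p ∈ D A n, Multiset.card p.parts := by
  rw [NqA, D, Finset.sum_filter]

/-- Number of distinct `A`-partitions of `n` containing `a`. -/
noncomputable def fA (a n : ℕ) : ℕ := ((D A n).filter fun p => a ∈ p.parts).card

lemma sum_toFinset_of_nodup (s : Multiset ℕ) (h : s.Nodup) (f : ℕ → ℤ) :
    ∑ a ∈ s.toFinset, f a = (s.map f).sum := by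
  rw [Finset.sum]
  congr 1
  rw [Multiset.toFinset_val, Multiset.dedup_eq_self.mpr h]

lemma fA_eq_zero (a n : ℕ) (h : n < a) : fA A a n = 0 := by
  rw [fA, Finset.card_eq_zero, Finset.filter_eq_empty_iff]
  intro p _ hmem
  have := Multiset.single_le_sum (fun x _ => Nat.zero_le x) a hmem
  rw [p.parts_sum] at this
  omega

def erasePart {n : ℕ} (a : ℕ) (p : n.Partition) (h : a ∈ p.parts) : (n - a).Partition where
  parts := p.parts.erase a
  parts_pos := fun {i} hi => p.parts_pos (Multiset.mem_of_mem_erase hi)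
  parts_sum := by
    have h1 : a + (p.parts.erase a).sum = p.parts.sum := Multiset.sum_erase h
    have h2 := p.parts_sum
    omega

def consPart {n : ℕ} (a : ℕ) (hapos : 0 < a) (han : a ≤ n) (q : (n - a).Partition) :
    n.Partition where
  parts := a ::ₘ q.parts
  parts_pos := fun {i} hi => by
    rcases Multiset.mem_cons.mp hi with rfl | hi
    · exact hapos
    · exact q.parts_pos hi
  parts_sum := by rw [Multiset.sum_cons, q.parts_sum]; omega

lemma fA_rec (a n : ℕ) (ha : a ∈ A) (hapos : 0 < a) (han : a ≤ n) :
    fA A a n + fA A a (n - a) = qA A (n - a) := by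
  classical
  have hcard : fA A a n = ((D A (n - a)).filter fun p => a ∉ p.parts).card := by
    rw [fA]
    refine Finset.card_bij'
      (fun p hp => erasePart a p (Finset.mem_filter.mp hp).2)
      (fun q _ => consPart a hapos han q) ?_ ?_ ?_ ?_
    · intro p hp
      rcases Finset.mem_filter.mp hp with ⟨hD, hmem⟩
      rcases Finset.mem_filter.mp hD with ⟨-, hin, hnd⟩
      refine Finset.mem_filter.mpr ⟨Finset.mem_filter.mpr ⟨Finset.mem_univ _,
        fun x hx => hin x (Multiset.mem_of_mem_erase hx), hnd.erase a⟩, ?_⟩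
      exact hnd.notMem_erase
    · intro q hq
      rcases Finset.mem_filter.mp hq with ⟨hD, hnmem⟩
      rcases Finset.mem_filter.mp hD with ⟨-, hin, hnd⟩
      refine Finset.mem_filter.mpr ⟨Finset.mem_filter.mpr ⟨Finset.mem_univ _, ?_,
        Multiset.nodup_cons.mpr ⟨hnmem, hnd⟩⟩, Multiset.mem_cons_self a q.parts⟩
      intro x hx
      rcases Multiset.mem_cons.mp hx with rfl | hx
      · exact ha
      · exact hin x hx
    · intro p hp
      apply Nat.Partition.ext
      simp only [consPart, erasePart]
      exact Multiset.cons_erase (Finset.mem_filter.mp hp).2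
    · intro q hq
      apply Nat.Partition.ext
      simp only [consPart, erasePart]
      exact Multiset.erase_cons_head a q.parts
  have hsplit := Finset.card_filter_add_card_filter_not
    (s := D A (n - a)) (p := fun p => a ∈ p.parts)
  rw [qA_eq, ← hsplit, hcard]
  simp only [fA]
  omega

lemma fA_eq_F (a : ℕ) (ha : a ∈ A) (hapos : 0 < a) (n : ℕ) :
    (fA A a n : ℤ) = ∑ j ∈ Finset.Icc 1 (n / a), (-1 : ℤ) ^ (j - 1) * qA A (n - a * j) := by
  induction n using Nat.strong_induction_on with
  | _ n ih =>
    by_cases han : a ≤ n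
    · have hrec := fA_rec A a n ha hapos han
      have ihm := ih (n - a) (by omega)
      set k := (n - a) / a with hk
      have hdiv : n / a = k + 1 := by
        conv_lhs => rw [show n = (n - a) + a by omega]
        rw [Nat.add_div_right _ hapos]
      have hfa : (fA A a n : ℤ) = (qA A (n - a) : ℤ) - fA A a (n - a) := by
        have : (fA A a n : ℤ) + fA A a (n - a) = qA A (n - a) := by exact_mod_cast hrec
        linarith
      rw [hfa, ihm, hdiv]
      rw [← Finset.Ico_add_one_right_eq_Icc 1 (k+1), Finset.sum_Ico_eq_sum_range,
        ← Finset.Ico_add_one_right_eq_Icc 1 k, Finset.sum_Ico_eq_sum_range]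
      simp only [Nat.add_sub_cancel, Nat.succ_sub_one]
      rw [Finset.sum_range_succ']
      have hterm : ∀ i ∈ Finset.range k,
          (-1 : ℤ) ^ ((1 + (i + 1)) - 1) * qA A (n - a * (1 + (i + 1))) =
          -((-1 : ℤ) ^ ((1 + i) - 1) * qA A ((n - a) - a * (1 + i))) := by
        intro i _
        have hm : a * (1 + (i + 1)) = a + a * (1 + i) := by ring
        have h1 : n - a * (1 + (i + 1)) = (n - a) - a * (1 + i) := by omega
        have h2 : (1 + (i + 1)) - 1 = ((1 + i) - 1) + 1 := by omega
        rw [h1, h2, pow_succ]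
        ring
      rw [Finset.sum_congr rfl hterm]
      have h3 : (1 + 0) - 1 = 0 := rfl
      have h4 : n - a * (1 + 0) = n - a := by
        have : a * (1 + 0) = a := by ring
        omega
      rw [h4]
      simp only [h3, pow_zero, one_mul, Finset.sum_neg_distrib]
      ring
    · rw [fA_eq_zero A a n (by omega), Nat.div_eq_of_lt (by omega)]
      simp

lemma weighted (hA : ∀ a ∈ A, 0 < a) (w : ℕ → ℤ) (n : ℕ) :
    ∑ t ∈ Finset.Icc 1 n,
        (∑ a ∈ t.divisors.filter (· ∈ A), (-1 : ℤ) ^ (t / a - 1) * w a) * (qA A (n - t) : ℤ)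
      = ∑ p ∈ D A n, ∑ a ∈ p.parts.toFinset, w a := by
  classical
  have h1 : ∑ t ∈ Finset.Icc 1 n,
        (∑ a ∈ t.divisors.filter (· ∈ A), (-1 : ℤ) ^ (t / a - 1) * w a) * (qA A (n - t) : ℤ)
      = ∑ x ∈ (Finset.Icc 1 n).sigma (fun t => t.divisors.filter (· ∈ A)),
          (-1 : ℤ) ^ (x.1 / x.2 - 1) * w x.2 * (qA A (n - x.1) : ℤ) := by
    exact (Finset.sum_congr rfl fun t _ => Finset.sum_mul _ _ _).trans
      (Finset.sum_sigma' (Finset.Icc 1 n) (fun t => t.divisors.filter (· ∈ A))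
        (fun t a => (-1 : ℤ) ^ (t / a - 1) * w a * (qA A (n - t) : ℤ)))
  have h2 : ∑ x ∈ (Finset.Icc 1 n).sigma (fun t => t.divisors.filter (· ∈ A)),
          (-1 : ℤ) ^ (x.1 / x.2 - 1) * w x.2 * (qA A (n - x.1) : ℤ)
      = ∑ y ∈ ((Finset.Icc 1 n).filter (· ∈ A)).sigma (fun a => Finset.Icc 1 (n / a)),
          (-1 : ℤ) ^ (y.2 - 1) * w y.1 * (qA A (n - y.1 * y.2) : ℤ) := by
    refine Finset.sum_nbij' (fun x => ⟨x.2, x.1 / x.2⟩) (fun y => ⟨y.1 * y.2, y.1⟩)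
      ?_ ?_ ?_ ?_ ?_
    · rintro ⟨t, a⟩ hx
      simp only [Finset.mem_sigma] at hx
      dsimp only at hx ⊢
      obtain ⟨ht, ha⟩ := hx
      rw [Finset.mem_filter, Nat.mem_divisors] at ha
      obtain ⟨⟨hdvd, htne⟩, haA⟩ := ha
      rw [Finset.mem_Icc] at ht
      have hapos : 0 < a := Nat.pos_of_dvd_of_pos hdvd (by omega)
      have hat : a ≤ t := Nat.le_of_dvd (by omega) hdvd
      rw [Finset.mem_sigma, Finset.mem_filter, Finset.mem_Icc, Finset.mem_Icc]
      refine ⟨⟨⟨hapos, le_trans hat ht.2⟩, haA⟩, ?_, Nat.div_le_div_right ht.2⟩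
      rw [Nat.one_le_div_iff hapos]; exact hat
    · rintro ⟨a, j⟩ hy
      simp only [Finset.mem_sigma, Finset.mem_filter, Finset.mem_Icc] at hy
      dsimp only at hy ⊢
      obtain ⟨⟨⟨ha1, han⟩, haA⟩, hj1, hjn⟩ := hy
      have hajn : a * j ≤ n := by
        rw [mul_comm]
        exact (Nat.le_div_iff_mul_le (by omega : 0 < a)).mp hjn
      rw [Finset.mem_sigma, Finset.mem_filter, Nat.mem_divisors, Finset.mem_Icc]
      exact ⟨⟨Nat.one_le_iff_ne_zero.mpr (by positivity), hajn⟩,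
        ⟨dvd_mul_right a j, by positivity⟩, haA⟩
    · rintro ⟨t, a⟩ hx
      simp only [Finset.mem_sigma] at hx
      dsimp only at hx ⊢
      obtain ⟨ht, ha⟩ := hx
      rw [Finset.mem_filter, Nat.mem_divisors] at ha
      rw [Nat.mul_div_cancel' ha.1.1]
    · rintro ⟨a, j⟩ hy
      simp only [Finset.mem_sigma, Finset.mem_filter, Finset.mem_Icc] at hy
      dsimp only at hy ⊢
      rw [Nat.mul_div_cancel_left j (by omega)]
    · rintro ⟨t, a⟩ hx
      simp only [Finset.mem_sigma] at hx
      dsimp only at hx ⊢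
      obtain ⟨ht, ha⟩ := hx
      rw [Finset.mem_filter, Nat.mem_divisors] at ha
      rw [Nat.mul_div_cancel' ha.1.1]
  have h3 : ∑ y ∈ ((Finset.Icc 1 n).filter (· ∈ A)).sigma (fun a => Finset.Icc 1 (n / a)),
          (-1 : ℤ) ^ (y.2 - 1) * w y.1 * (qA A (n - y.1 * y.2) : ℤ)
      = ∑ a ∈ (Finset.Icc 1 n).filter (· ∈ A), w a * (fA A a n : ℤ) := by
    refine ((Finset.sum_sigma' ((Finset.Icc 1 n).filter (· ∈ A)) (fun a => Finset.Icc 1 (n / a))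
      (fun a j => (-1 : ℤ) ^ (j - 1) * w a * (qA A (n - a * j) : ℤ))).symm).trans ?_
    refine Finset.sum_congr rfl fun a haa => ?_
    rw [Finset.mem_filter, Finset.mem_Icc] at haa
    rw [fA_eq_F A a haa.2 (by omega), Finset.mul_sum]
    exact Finset.sum_congr rfl fun j _ => by ring
  have h4 : ∀ a, (fA A a n : ℤ) = ∑ p ∈ D A n, (if a ∈ p.parts then (1 : ℤ) else 0) := by
    intro a
    rw [fA, Finset.card_filter]
    push_cast
    rfl
  rw [h1, h2, h3]
  have h5 : ∑ a ∈ (Finset.Icc 1 n).filter (· ∈ A), w a * (fA A a n : ℤ)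
      = ∑ p ∈ D A n, ∑ a ∈ (Finset.Icc 1 n).filter (· ∈ A),
          (if a ∈ p.parts then w a else 0) := by
    rw [Finset.sum_comm]
    refine Finset.sum_congr rfl fun a _ => ?_
    rw [h4, Finset.mul_sum]
    exact Finset.sum_congr rfl fun p _ => by split <;> simp
  rw [h5]
  refine Finset.sum_congr rfl fun p hp => ?_
  rw [D, Finset.mem_filter] at hp
  obtain ⟨-, hin, hnd⟩ := hp
  rw [← Finset.sum_filter]
  refine Finset.sum_congr ?_ fun _ _ => rfl
  ext x
  rw [Finset.mem_filter, Finset.mem_filter, Finset.mem_Icc, Multiset.mem_toFinset]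
  constructor
  · rintro ⟨-, hx⟩; exact hx
  · intro hx
    have hx1 : 0 < x := p.parts_pos hx
    have hx2 : x ≤ n := by
      have := Multiset.single_le_sum (fun y _ => Nat.zero_le y) x hx
      rw [p.parts_sum] at this; exact this
    exact ⟨⟨⟨hx1, hx2⟩, hin x hx⟩, hx⟩

lemma NqA_formula (hA : ∀ a ∈ A, 0 < a) (n : ℕ) :
    (NqA A n : ℤ) = ∑ t ∈ Finset.Icc 1 n, tauSA A t * (qA A (n - t) : ℤ) := by
  classical
  have h := weighted A hA (fun _ => (1 : ℤ)) n
  calc (NqA A n : ℤ) = ∑ p ∈ D A n, (Multiset.card p.parts : ℤ) := by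
        rw [NqA_eq]; push_cast; rfl
    _ = ∑ p ∈ D A n, ∑ a ∈ p.parts.toFinset, (1 : ℤ) := by
        refine Finset.sum_congr rfl fun p hp => ?_
        rw [D, Finset.mem_filter] at hp
        rw [Finset.sum_const, nsmul_eq_mul, mul_one,
          Multiset.toFinset_card_of_nodup hp.2.2]
    _ = ∑ t ∈ Finset.Icc 1 n,
          (∑ a ∈ t.divisors.filter (· ∈ A), (-1 : ℤ) ^ (t / a - 1) * 1) * (qA A (n - t) : ℤ) :=
        h.symm
    _ = ∑ t ∈ Finset.Icc 1 n, tauSA A t * (qA A (n - t) : ℤ) := by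
        refine Finset.sum_congr rfl fun t _ => ?_
        rw [tauSA]
        simp [mul_one]

lemma qA_formula (hA : ∀ a ∈ A, 0 < a) (n : ℕ) :
    (n : ℤ) * qA A n = ∑ m ∈ Finset.Icc 1 n, sigmaSA A m * (qA A (n - m) : ℤ) := by
  classical
  have h := weighted A hA (fun a => (a : ℤ)) n
  calc (n : ℤ) * qA A n = ∑ p ∈ D A n, (n : ℤ) := by
        rw [Finset.sum_const, nsmul_eq_mul, qA_eq]; ring
    _ = ∑ p ∈ D A n, ∑ a ∈ p.parts.toFinset, (a : ℤ) := by
        refine Finset.sum_congr rfl fun p hp => ?_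
        rw [D, Finset.mem_filter] at hp
        rw [sum_toFinset_of_nodup _ hp.2.2]
        rw [← Nat.cast_multiset_sum, p.parts_sum]
    _ = ∑ t ∈ Finset.Icc 1 n,
          (∑ a ∈ t.divisors.filter (· ∈ A), (-1 : ℤ) ^ (t / a - 1) * (a : ℤ)) * (qA A (n - t) : ℤ) :=
        h.symm
    _ = ∑ m ∈ Finset.Icc 1 n, sigmaSA A m * (qA A (n - m) : ℤ) := by
        refine Finset.sum_congr rfl fun t _ => ?_
        rw [sigmaSA]

end Stmt14Aux

theorem stmt14 (A : Set ℕ) (hA : ∀ a ∈ A, 0 < a) (n : ℕ) (hn : 0 < n) :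
    (n : ℤ) * NqA A n =
      (∑ k ∈ Finset.Icc 1 (n - 1), (NqA A k : ℤ) * sigmaSA A (n - k)) +
        ∑ t ∈ Finset.Icc 1 n, (t : ℤ) * tauSA A t * (qA A (n - t) : ℤ) := by
  classical
  open Stmt14Aux in
  have key : ∀ t ∈ Finset.Icc 1 n, (n : ℤ) * (tauSA A t * (qA A (n - t) : ℤ))
      = (t : ℤ) * tauSA A t * (qA A (n - t) : ℤ)
        + tauSA A t * ∑ m ∈ Finset.Icc 1 (n - t), sigmaSA A m * (qA A (n - t - m) : ℤ) := by
    intro t ht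
    rw [Finset.mem_Icc] at ht
    have h1 := qA_formula A hA (n - t)
    have hcast : ((n - t : ℕ) : ℤ) = (n : ℤ) - t := by
      have := ht.2; push_cast [this]; ring
    calc (n : ℤ) * (tauSA A t * (qA A (n - t) : ℤ))
        = (t : ℤ) * tauSA A t * (qA A (n - t) : ℤ)
          + tauSA A t * (((n - t : ℕ) : ℤ) * (qA A (n - t) : ℤ)) := by rw [hcast]; ring
      _ = _ := by rw [h1]
  have hswap : ∑ k ∈ Finset.Icc 1 (n - 1), (NqA A k : ℤ) * sigmaSA A (n - k)
      = ∑ t ∈ Finset.Icc 1 n,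
          tauSA A t * ∑ m ∈ Finset.Icc 1 (n - t), sigmaSA A m * (qA A (n - t - m) : ℤ) := by
    have e1 : ∀ k ∈ Finset.Icc 1 (n - 1), (NqA A k : ℤ) * sigmaSA A (n - k)
        = ∑ t ∈ Finset.Icc 1 k, tauSA A t * (qA A (k - t) : ℤ) * sigmaSA A (n - k) := by
      intro k _
      rw [NqA_formula A hA k, Finset.sum_mul]
    rw [Finset.sum_congr rfl e1, Finset.sum_sigma']
    have e2 : ∀ t ∈ Finset.Icc 1 n,
        tauSA A t * ∑ m ∈ Finset.Icc 1 (n - t), sigmaSA A m * (qA A (n - t - m) : ℤ)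
        = ∑ m ∈ Finset.Icc 1 (n - t), tauSA A t * (sigmaSA A m * (qA A (n - t - m) : ℤ)) :=
      fun t _ => Finset.mul_sum _ _ _
    rw [Finset.sum_congr rfl e2, Finset.sum_sigma']
    refine Finset.sum_nbij' (fun x => ⟨x.2, n - x.1⟩) (fun y => ⟨n - y.2, y.1⟩) ?_ ?_ ?_ ?_ ?_
    · rintro ⟨k, t⟩ hx
      simp only [Finset.mem_sigma, Finset.mem_Icc] at hx ⊢
      omega
    · rintro ⟨t, m⟩ hy
      simp only [Finset.mem_sigma, Finset.mem_Icc] at hy ⊢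
      omega
    · rintro ⟨k, t⟩ hx
      simp only [Finset.mem_sigma, Finset.mem_Icc] at hx
      have : n - (n - k) = k := by omega
      simp only [this]
    · rintro ⟨t, m⟩ hy
      simp only [Finset.mem_sigma, Finset.mem_Icc] at hy
      have : n - (n - m) = m := by omega
      simp only [this]
    · rintro ⟨k, t⟩ hx
      simp only [Finset.mem_sigma, Finset.mem_Icc] at hx
      dsimp only
      have h1 : n - t - (n - k) = k - t := by omega
      rw [h1]
      ring
  rw [NqA_formula A hA n, Finset.mul_sum, Finset.sum_congr rfl key,
    Finset.sum_add_distrib, hswap]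
  ring
end

section
/- Let A be a set of positive integers and s ∈ A. For every positive integer n ≥ s, N^p_A(n) − N^p_A(n−s) = p_A(n−s) + N^p_{A∖{s}}(n), where N^p_B(m) is the total number of parts over partitions of m with parts from B, and p_A(m) is the number of partitions of m into parts from A with p_A(0)=1 (and N^p_A(0)=0). -/
open scoped Classical
open Finset

def erasePart (n s : ℕ) (p : n.Partition) (h : s ∈ p.parts) : (n - s).Partition where
  parts := p.parts.erase s
  parts_pos := fun hx => p.parts_pos (Multiset.mem_of_mem_erase hx)
  parts_sum := by
    have hc : s ::ₘ p.parts.erase s = p.parts := Multiset.cons_erase h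
    have h2 : (s ::ₘ p.parts.erase s).sum = n := by rw [hc, p.parts_sum]
    simp only [Multiset.sum_cons] at h2
    omega

def consPart (n s : ℕ) (hs : 0 < s) (hn : s ≤ n) (q : (n - s).Partition) : n.Partition where
  parts := s ::ₘ q.parts
  parts_pos := by
    intro x hx
    rcases Multiset.mem_cons.mp hx with rfl | hx
    · exact hs
    · exact q.parts_pos hx
  parts_sum := by
    simp only [Multiset.sum_cons, q.parts_sum]
    omega

theorem stmt15 (A : Set ℕ) (hA : ∀ a ∈ A, 0 < a) (s : ℕ) (hs : s ∈ A)
    (n : ℕ) (hn : s ≤ n) :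
    (NpA A n : ℤ) - NpA A (n - s) = pA A (n - s) + NpA (A \ {s}) n := by
  classical
  have hspos : 0 < s := hA s hs
  have hNn : NpA A n = ∑ p ∈ univ.filter (fun p : n.Partition => ∀ x ∈ p.parts, x ∈ A),
      p.parts.card := by
    rw [NpA, Finset.sum_filter]
  have hsplit : NpA A n =
      (∑ p ∈ univ.filter (fun p : n.Partition => (∀ x ∈ p.parts, x ∈ A) ∧ s ∈ p.parts),
        p.parts.card) + NpA (A \ {s}) n := by
    rw [NpA, NpA, Finset.sum_filter, ← Finset.sum_add_distrib]
    apply Finset.sum_congr rfl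
    intro p _
    have hiff : (∀ x ∈ p.parts, x ∈ A \ {s}) ↔ (∀ x ∈ p.parts, x ∈ A) ∧ s ∉ p.parts := by
      constructor
      · intro h
        exact ⟨fun x hx => (h x hx).1, fun hsp => (h s hsp).2 rfl⟩
      · rintro ⟨h1, h2⟩ x hx
        exact ⟨h1 x hx, fun hxs => h2 (hxs ▸ hx)⟩
    simp only [hiff]
    by_cases h1 : ∀ x ∈ p.parts, x ∈ A <;> by_cases h2 : s ∈ p.parts <;> simp [h1, h2]
  have key : (∑ p ∈ univ.filter (fun p : n.Partition => (∀ x ∈ p.parts, x ∈ A) ∧ s ∈ p.parts),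
        p.parts.card)
      = ∑ q ∈ univ.filter (fun q : (n - s).Partition => ∀ x ∈ q.parts, x ∈ A),
        (q.parts.card + 1) := by
    refine Finset.sum_bij' (i := fun p hp => erasePart n s p
        (by simpa using (Finset.mem_filter.mp hp).2.2))
      (j := fun q hq => consPart n s hspos hn q) ?hi ?hj ?li ?ri ?h
    case hi =>
      intro p hp
      simp only [Finset.mem_filter, Finset.mem_univ, true_and] at hp ⊢
      intro x hx
      exact hp.1 x (Multiset.mem_of_mem_erase hx)
    case hj =>
      intro q hq
      simp only [Finset.mem_filter, Finset.mem_univ, true_and] at hq ⊢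
      refine ⟨?_, Multiset.mem_cons_self s q.parts⟩
      intro x hx
      rcases Multiset.mem_cons.mp hx with rfl | hx
      · exact hs
      · exact hq x hx
    case li =>
      intro p hp
      simp only [Finset.mem_filter, Finset.mem_univ, true_and] at hp
      apply Nat.Partition.ext
      show s ::ₘ p.parts.erase s = p.parts
      exact Multiset.cons_erase hp.2
    case ri =>
      intro q hq
      apply Nat.Partition.ext
      show (s ::ₘ q.parts).erase s = q.parts
      simp
    case h =>
      intro p hp
      simp only [Finset.mem_filter, Finset.mem_univ, true_and] at hp
      show p.parts.card = (p.parts.erase s).card + 1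
      rw [Multiset.card_erase_of_mem hp.2, Nat.pred_eq_sub_one]
      have hcp : 0 < p.parts.card := Multiset.card_pos.mpr (by
        intro h0
        rw [h0] at hp
        simp at hp)
      omega
  have hsum : (∑ q ∈ univ.filter (fun q : (n - s).Partition => ∀ x ∈ q.parts, x ∈ A),
        (q.parts.card + 1)) = NpA A (n - s) + pA A (n - s) := by
    rw [Finset.sum_add_distrib, NpA, pA, Finset.sum_filter, Finset.sum_filter]
  have hfin : NpA A n = NpA A (n - s) + pA A (n - s) + NpA (A \ {s}) n := by
    rw [hsplit, key, hsum]
  rw [hfin]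
  push_cast
  ring
end

section
/- Let cl_A(m) denote the number of Carlitz compositions of m with parts from a set A of positive integers (compositions in which adjacent parts are distinct), with cl_A(0)=1. Then for every positive integer n, cl_A(n) = Σ_{k=0}^{n−1} cl_A(k) · τ^s_A(n−k), where τ^s_A(m) = Σ_{a∈A, a∣m} (−1)^{m/a − 1}. -/
open scoped Classical
open Finset

section Helpers

variable (A : Set ℕ)

/-- Finset of Carlitz-type lists (parts in `A`, sum `m`, adjacent distinct). -/
noncomputable def LCc (m : ℕ) : Finset (List ℕ) :=
  ((Finset.univ : Finset (Composition m)).image Composition.blocks).filter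
    (fun l => (∀ x ∈ l, x ∈ A) ∧ l.sum = m ∧ l.Chain' (· ≠ ·))

theorem mem_LCc (hA : ∀ a ∈ A, 0 < a) {m : ℕ} {l : List ℕ} :
    l ∈ LCc A m ↔ (∀ x ∈ l, x ∈ A) ∧ l.sum = m ∧ l.Chain' (· ≠ ·) := by
  constructor
  · intro h; exact (Finset.mem_filter.1 h).2
  · intro h
    refine Finset.mem_filter.2 ⟨?_, h⟩
    exact Finset.mem_image.2 ⟨⟨l, fun {i} hi => hA i (h.1 i hi), h.2.1⟩, Finset.mem_univ _, rfl⟩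

theorem clA_eq_card (hA : ∀ a ∈ A, 0 < a) (m : ℕ) :
    Nat.card {l : List ℕ // (∀ x ∈ l, x ∈ A) ∧ l.sum = m ∧ l.Chain' (· ≠ ·)}
      = (LCc A m).card := by
  rw [← Fintype.card_coe, ← Nat.card_eq_fintype_card]
  exact Nat.card_congr (Equiv.subtypeEquivRight fun l => (mem_LCc A hA).symm)

/-- The big index finset of triples. -/
noncomputable def SS (n : ℕ) : Finset (List ℕ × ℕ × ℕ) :=
  (Finset.range n).biUnion
    (fun k => (LCc A k) ×ˢ (((n - k).divisorsAntidiagonal).filter (fun p => p.1 ∈ A)))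

theorem mem_SS (hA : ∀ a ∈ A, 0 < a) {n : ℕ} {l : List ℕ} {a j : ℕ} :
    (l, a, j) ∈ SS A n ↔
      (∀ x ∈ l, x ∈ A) ∧ l.Chain' (· ≠ ·) ∧ a ∈ A ∧ 0 < a ∧ 0 < j ∧
        l.sum + a * j = n := by
  simp only [SS, Finset.mem_biUnion, Finset.mem_range, Finset.mem_product,
    Finset.mem_filter, Nat.mem_divisorsAntidiagonal, mem_LCc A hA]
  constructor
  · rintro ⟨k, hk, ⟨hlA, hsum, hch⟩, ⟨⟨hmul, hne⟩, haA⟩⟩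
    have ha : 0 < a := hA a haA
    have hj : 0 < j := by
      rcases Nat.eq_zero_or_pos j with h | h
      · subst h; simp at hmul; omega
      · exact h
    refine ⟨hlA, hch, haA, ha, hj, ?_⟩
    omega
  · rintro ⟨hlA, hch, haA, ha, hj, hsum⟩
    have haj : 0 < a * j := Nat.mul_pos ha hj
    refine ⟨l.sum, by omega, ⟨hlA, rfl, hch⟩, ⟨⟨by omega, by omega⟩, haA⟩⟩

theorem tauSA_eq_antidiag (m : ℕ) :
    (∑ a ∈ m.divisors.filter (· ∈ A), (-1 : ℤ) ^ (m / a - 1))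
      = ∑ p ∈ m.divisorsAntidiagonal.filter (fun p => p.1 ∈ A), (-1 : ℤ) ^ (p.2 - 1) := by
  rw [Finset.sum_filter, Finset.sum_filter,
    Nat.sum_divisorsAntidiagonal (fun a j => if a ∈ A then (-1 : ℤ) ^ (j - 1) else 0)]

theorem chain_drop {l : List ℕ} {a : ℕ} (hch : l.Chain' (· ≠ ·))
    (hla : l.getLast? = some a) :
    l.dropLast.Chain' (· ≠ ·) ∧ l.dropLast.getLast? ≠ some a ∧
      l.dropLast ++ [a] = l ∧ l.sum = l.dropLast.sum + a := by
  have hne : l ≠ [] := by rintro rfl; simp at hla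
  have hlast : l.getLast hne = a := by
    have := List.getLast?_eq_getLast hne
    rw [this] at hla; exact Option.some.inj hla
  have hdec : l.dropLast ++ [a] = l := by
    rw [← hlast]; exact List.dropLast_append_getLast hne
  have hch' := hch
  rw [← hdec] at hch'
  unfold List.Chain' at hch'
  rw [List.isChain_append] at hch'
  refine ⟨hch'.1, ?_, hdec, ?_⟩
  · intro h
    exact (hch'.2.2 a h a (by simp)) rfl
  · conv_lhs => rw [← hdec]
    simp [List.sum_append]

theorem chain_append {l : List ℕ} {a : ℕ} (hch : l.Chain' (· ≠ ·))
    (hla : l.getLast? ≠ some a) : (l ++ [a]).Chain' (· ≠ ·) := by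
  unfold List.Chain'
  rw [List.isChain_append]
  refine ⟨hch, List.isChain_singleton a, ?_⟩
  intro x hx y hy
  simp only [List.head?_cons, Option.mem_some_iff] at hy
  subst hy
  rintro rfl
  exact hla hx

end Helpers

/-- The involution. -/
noncomputable def ginv (p : List ℕ × ℕ × ℕ) : List ℕ × ℕ × ℕ :=
  if p.1.getLast? = some p.2.1 then (p.1.dropLast, p.2.1, p.2.2 + 1)
  else (p.1 ++ [p.2.1], p.2.1, p.2.2 - 1)


theorem stmt16 (A : Set ℕ) (hA : ∀ a ∈ A, 0 < a) (n : ℕ) (hn : 0 < n) :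
    (clA A n : ℤ) = ∑ k ∈ Finset.range n, (clA A k : ℤ) * tauSA A (n - k) := by
  classical
  set f : List ℕ × ℕ × ℕ → ℤ := fun p => (-1 : ℤ) ^ (p.2.2 - 1) with hf
  -- RHS as a sum over SS
  have hdisj : (↑(Finset.range n) : Set ℕ).PairwiseDisjoint
      (fun k => (LCc A k) ×ˢ (((n - k).divisorsAntidiagonal).filter (fun p => p.1 ∈ A))) := by
    intro k _ k' _ hkk'
    refine Finset.disjoint_left.2 ?_
    rintro ⟨l, a, j⟩ h1 h2
    have e1 := ((mem_LCc A hA).1 (Finset.mem_product.1 h1).1).2.1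
    have e2 := ((mem_LCc A hA).1 (Finset.mem_product.1 h2).1).2.1
    exact hkk' (e1 ▸ e2 ▸ rfl)
  have hRHS : ∑ k ∈ Finset.range n, (clA A k : ℤ) * tauSA A (n - k) = ∑ p ∈ SS A n, f p := by
    rw [SS, Finset.sum_biUnion hdisj]
    refine Finset.sum_congr rfl fun k hk => ?_
    rw [Finset.sum_product]
    have hinner : ∀ l ∈ LCc A k,
        (∑ p ∈ ((n - k).divisorsAntidiagonal.filter (fun p => p.1 ∈ A)), f (l, p))
          = tauSA A (n - k) := by
      intro l _
      rw [tauSA, tauSA_eq_antidiag]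
    rw [Finset.sum_congr rfl hinner, Finset.sum_const, clA, clA_eq_card A hA, nsmul_eq_mul]
  rw [hRHS]
  -- split into fixed and moving parts
  set P : List ℕ × ℕ × ℕ → Prop := fun p => p.2.2 = 1 ∧ p.1.getLast? ≠ some p.2.1 with hP
  set Ffix := (SS A n).filter P with hFfix
  set M := (SS A n).filter (fun p => ¬ P p) with hM
  have hsplit : ∑ p ∈ Ffix, f p + ∑ p ∈ M, f p = ∑ p ∈ SS A n, f p :=
    Finset.sum_filter_add_sum_filter_not (SS A n) P f
  -- the moving part sums to zero
  have hM0 : ∑ p ∈ M, f p = 0 := by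
    refine Finset.sum_involution (fun p _ => ginv p) ?_ ?_ ?_ ?_
    · rintro ⟨l, a, j⟩ hp
      show f (l, a, j) + f (ginv (l, a, j)) = 0
      obtain ⟨hS, hbad⟩ := Finset.mem_filter.1 hp
      obtain ⟨hlA, hch, haA, ha, hj, hsum⟩ := (mem_SS A hA).1 hS
      have hpow : (-1 : ℤ) ^ j = -(-1 : ℤ) ^ (j - 1) := by
        conv_lhs => rw [show j = j - 1 + 1 by omega]
        rw [pow_succ]; ring
      by_cases hend : l.getLast? = some a
      · have e1 : ginv (l, a, j) = (l.dropLast, a, j + 1) := by simp [ginv, hend]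
        rw [e1]
        show (-1 : ℤ) ^ (j - 1) + (-1 : ℤ) ^ (j + 1 - 1) = 0
        rw [Nat.add_sub_cancel, hpow]; ring
      · have hj2 : 2 ≤ j := by
          rcases Nat.lt_or_ge j 2 with h | h
          · exfalso; exact hbad ⟨(by omega : j = 1), hend⟩
          · exact h
        have e1 : ginv (l, a, j) = (l ++ [a], a, j - 1) := by simp [ginv, hend]
        rw [e1]
        show (-1 : ℤ) ^ (j - 1) + (-1 : ℤ) ^ (j - 1 - 1) = 0
        have h2 : (-1 : ℤ) ^ (j - 1) = -(-1 : ℤ) ^ (j - 1 - 1) := by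
          conv_lhs => rw [show j - 1 = (j - 1 - 1) + 1 by omega]
          rw [pow_succ]; ring
        rw [h2]; ring
    · rintro ⟨l, a, j⟩ hp -
      show ginv (l, a, j) ≠ (l, a, j)
      by_cases hend : l.getLast? = some a
      · have e1 : ginv (l, a, j) = (l.dropLast, a, j + 1) := by simp [ginv, hend]
        rw [e1]
        intro heq
        have : j + 1 = j := congrArg (fun q => q.2.2) heq
        omega
      · have e1 : ginv (l, a, j) = (l ++ [a], a, j - 1) := by simp [ginv, hend]
        rw [e1]
        intro heq
        have : (l ++ [a]).length = l.length := congrArg (fun q => q.1.length) heq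
        simp at this
    · rintro ⟨l, a, j⟩ hp
      show ginv (l, a, j) ∈ M
      obtain ⟨hS, hbad⟩ := Finset.mem_filter.1 hp
      obtain ⟨hlA, hch, haA, ha, hj, hsum⟩ := (mem_SS A hA).1 hS
      by_cases hend : l.getLast? = some a
      · obtain ⟨hch', hla', hdec, hsum'⟩ := chain_drop hch hend
        have e1 : ginv (l, a, j) = (l.dropLast, a, j + 1) := by simp [ginv, hend]
        rw [e1]
        refine Finset.mem_filter.2 ⟨(mem_SS A hA).2 ⟨?_, hch', haA, ha, by omega, ?_⟩, ?_⟩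
        · intro x hx; exact hlA x ((List.dropLast_sublist l).subset hx)
        · rw [Nat.mul_succ]; omega
        · rintro ⟨h1, -⟩
          have h1' : j + 1 = 1 := h1
          omega
      · have hj2 : 2 ≤ j := by
          rcases Nat.lt_or_ge j 2 with h | h
          · exfalso; exact hbad ⟨(by omega : j = 1), hend⟩
          · exact h
        have e1 : ginv (l, a, j) = (l ++ [a], a, j - 1) := by simp [ginv, hend]
        rw [e1]
        have hmm : a * (j - 1) + a = a * j := by
          obtain ⟨m, rfl⟩ : ∃ m, j = m + 1 := ⟨j - 1, by omega⟩
          simp [Nat.mul_succ]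
        refine Finset.mem_filter.2
          ⟨(mem_SS A hA).2 ⟨?_, chain_append hch hend, haA, ha, by omega, ?_⟩, ?_⟩
        · intro x hx
          rcases List.mem_append.1 hx with h | h
          · exact hlA x h
          · simp at h; subst h; exact haA
        · rw [List.sum_append]; simp; omega
        · rintro ⟨-, h2⟩; exact h2 List.getLast?_concat
    · rintro ⟨l, a, j⟩ hp
      obtain ⟨hS, hbad⟩ := Finset.mem_filter.1 hp
      obtain ⟨hlA, hch, haA, ha, hj, hsum⟩ := (mem_SS A hA).1 hS
      by_cases hend : l.getLast? = some a
      · obtain ⟨hch', hla', hdec, hsum'⟩ := chain_drop hch hend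
        have e1 : ginv (l, a, j) = (l.dropLast, a, j + 1) := by simp [ginv, hend]
        have e2 : ginv (l.dropLast, a, j + 1) = (l.dropLast ++ [a], a, j + 1 - 1) := by
          simp [ginv, hla']
        show ginv (ginv (l, a, j)) = (l, a, j)
        rw [e1, e2, Nat.add_sub_cancel, hdec]
      · have hj2 : 2 ≤ j := by
          rcases Nat.lt_or_ge j 2 with h | h
          · exfalso; exact hbad ⟨(by omega : j = 1), hend⟩
          · exact h
        have e1 : ginv (l, a, j) = (l ++ [a], a, j - 1) := by simp [ginv, hend]
        have e2 : ginv (l ++ [a], a, j - 1) = ((l ++ [a]).dropLast, a, j - 1 + 1) := by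
          simp [ginv, List.getLast?_concat]
        show ginv (ginv (l, a, j)) = (l, a, j)
        rw [e1, e2, List.dropLast_concat, Nat.sub_add_cancel (by omega)]
  -- the fixed part equals the count of Carlitz compositions of n
  have hFixVal : ∑ p ∈ Ffix, f p = (Ffix.card : ℤ) := by
    have hone : ∀ p ∈ Ffix, f p = 1 := by
      intro p hp
      obtain ⟨-, h1, -⟩ := Finset.mem_filter.1 hp
      show (-1 : ℤ) ^ (p.2.2 - 1) = 1
      rw [h1]
      norm_num
    rw [Finset.sum_congr rfl hone, Finset.sum_const, nsmul_eq_mul, mul_one]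
  have hcard : Ffix.card = (LCc A n).card := by
    refine Finset.card_bij' (fun p _ => p.1 ++ [p.2.1])
      (fun l _ => (l.dropLast, l.getLastD 0, 1)) ?_ ?_ ?_ ?_
    · rintro ⟨l, a, j⟩ hp
      obtain ⟨hS, hj1, hend⟩ := Finset.mem_filter.1 hp
      obtain ⟨hlA, hch, haA, ha, hj, hsum⟩ := (mem_SS A hA).1 hS
      refine (mem_LCc A hA).2 ⟨?_, ?_, chain_append hch hend⟩
      · intro x hx
        rcases List.mem_append.1 hx with h | h
        · exact hlA x h
        · simp at h; subst h; exact haA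
      · rw [List.sum_append]; simp
        have : j = 1 := hj1
        subst this; omega
    · intro l hl
      obtain ⟨hlA, hsum, hch⟩ := (mem_LCc A hA).1 hl
      have hne : l ≠ [] := by rintro rfl; simp at hsum; omega
      obtain ⟨a, hend⟩ : ∃ a, l.getLast? = some a := ⟨_, List.getLast?_eq_getLast hne⟩
      have hgd : l.getLastD 0 = a := by rw [List.getLastD_eq_getLast?, hend]; rfl
      obtain ⟨hch', hla', hdec, hsum'⟩ := chain_drop hch hend
      have haA : a ∈ A := hlA a (by rw [← hdec]; simp)
      show (l.dropLast, l.getLastD 0, 1) ∈ Ffix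
      rw [hgd]
      refine Finset.mem_filter.2
        ⟨(mem_SS A hA).2 ⟨?_, hch', haA, hA a haA, one_pos, ?_⟩, rfl, hla'⟩
      · intro x hx; exact hlA x ((List.dropLast_sublist l).subset hx)
      · rw [Nat.mul_one]; omega
    · rintro ⟨l, a, j⟩ hp
      obtain ⟨hS, hj1, hend⟩ := Finset.mem_filter.1 hp
      have : j = 1 := hj1
      subst this
      have hgd : (l ++ [a]).getLastD 0 = a := by
        rw [List.getLastD_eq_getLast?, List.getLast?_concat]; rfl
      show ((l ++ [a]).dropLast, (l ++ [a]).getLastD 0, 1) = (l, a, 1)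
      rw [List.dropLast_concat, hgd]
    · intro l hl
      obtain ⟨hlA, hsum, hch⟩ := (mem_LCc A hA).1 hl
      have hne : l ≠ [] := by rintro rfl; simp at hsum; omega
      obtain ⟨a, hend⟩ : ∃ a, l.getLast? = some a := ⟨_, List.getLast?_eq_getLast hne⟩
      have hgd : l.getLastD 0 = a := by rw [List.getLastD_eq_getLast?, hend]; rfl
      obtain ⟨hch', hla', hdec, hsum'⟩ := chain_drop hch hend
      show l.dropLast ++ [l.getLastD 0] = l
      rw [hgd]; exact hdec
  rw [← hsplit, hM0, add_zero, hFixVal, hcard, clA, clA_eq_card A hA]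
end

section
/- Let cl_b(m) be the number of Carlitz-binary compositions of m with cl_b(0)=1, and let h(m) be the Hamming weight of m with h(0)=0. Then for every positive integer n, Σ_{k=0}^{n} cl_b(k) · (1 − h(n−k)) = 1. -/
open scoped Classical
open Finset

/- ### auxiliary -/

def CLset (m : ℕ) : Set (List ℕ) :=
  {l | (∀ x ∈ l, x ∈ binA) ∧ l.sum = m ∧ l.Chain' (· ≠ ·)}

def CCset (m a : ℕ) : Set (List ℕ) := {l | l ∈ CLset m ∧ l.head? ≠ some a}

lemma CLset_finite (m : ℕ) : (CLset m).Finite := by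
  have h : CLset m ⊆ (fun l : List (Fin (m+1)) => l.map Fin.val) ''
      {l : List (Fin (m+1)) | l.length ≤ m} := by
    rintro l ⟨hA, hs, -⟩
    have hone : ∀ x ∈ l, 1 ≤ x := by
      rintro x hx
      obtain ⟨j, rfl⟩ := hA x hx
      exact Nat.one_le_two_pow
    have hlt : ∀ x ∈ l, x < m + 1 := by
      intro x hx
      have := List.le_sum_of_mem hx
      omega
    refine ⟨l.attach.map (fun x => ⟨x.1, hlt x.1 x.2⟩), ?_, ?_⟩
    · simp only [Set.mem_setOf_eq, List.length_map, List.length_attach]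
      have := List.length_le_sum_of_one_le l hone
      omega
    · simp [List.map_map, Function.comp]
  exact ((List.finite_length_le _ m).image _).subset h

lemma CCset_finite (m a : ℕ) : (CCset m a).Finite :=
  (CLset_finite m).subset (fun _ h => h.1)

noncomputable def TL (m : ℕ) : Finset (List ℕ) := (CLset_finite m).toFinset
noncomputable def TCC (m a : ℕ) : Finset (List ℕ) := (CCset_finite m a).toFinset
noncomputable def cl (m : ℕ) : ℕ := (TL m).card
noncomputable def cc (m a : ℕ) : ℕ := (TCC m a).card
def v2 (r : ℕ) : ℕ := r.factorization 2

lemma mem_TL {m : ℕ} {l : List ℕ} :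
    l ∈ TL m ↔ (∀ x ∈ l, x ∈ binA) ∧ l.sum = m ∧ l.Chain' (· ≠ ·) := by
  simp [TL, CLset]

lemma mem_TCC {m a : ℕ} {l : List ℕ} :
    l ∈ TCC m a ↔ ((∀ x ∈ l, x ∈ binA) ∧ l.sum = m ∧ l.Chain' (· ≠ ·)) ∧ l.head? ≠ some a := by
  simp [TCC, CCset, CLset]

lemma clA_eq_cl (m : ℕ) : clA binA m = cl m := by
  rw [clA, cl, TL]
  rw [show {l : List ℕ // (∀ x ∈ l, x ∈ binA) ∧ l.sum = m ∧ l.Chain' (· ≠ ·)} = ↥(CLset m) from rfl]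
  rw [Nat.card_coe_set_eq, Set.ncard_eq_toFinset_card _ (CLset_finite m)]


lemma cl_zero : cl 0 = 1 := by
  have h : TL 0 = {[]} := by
    ext l
    simp only [mem_TL, Finset.mem_singleton]
    constructor
    · rintro ⟨hA, hs, -⟩
      cases l with
      | nil => rfl
      | cons x t =>
        obtain ⟨i, rfl⟩ := hA x List.mem_cons_self
        have : 1 ≤ 2 ^ i := Nat.one_le_two_pow
        simp only [List.sum_cons] at hs
        omega
    · rintro rfl
      exact ⟨by simp, rfl, List.isChain_nil⟩
  rw [cl, h, Finset.card_singleton]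

lemma cc_of_gt {m a : ℕ} (h : m < a) : cc m a = cl m := by
  have : TCC m a = TL m := by
    ext l
    simp only [mem_TCC, mem_TL]
    refine ⟨fun hl => hl.1, fun hl => ⟨hl, ?_⟩⟩
    cases l with
    | nil => simp
    | cons x t =>
      obtain ⟨-, hs, -⟩ := hl
      have hx : x ≤ (x :: t).sum := List.le_sum_of_mem List.mem_cons_self
      simp only [List.head?_cons, ne_eq, Option.some_inj]
      rintro rfl
      omega
  rw [cc, this, cl]

lemma cl_split {m : ℕ} (j : ℕ) (h : 2 ^ j ≤ m) :
    cl m = cc m (2 ^ j) + cc (m - 2 ^ j) (2 ^ j) := by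
  set a := 2 ^ j with ha
  have ha1 : 1 ≤ a := Nat.one_le_two_pow
  have key : TL m = TCC m a ∪ (TCC (m - a) a).image (a :: ·) := by
    ext l
    simp only [mem_TL, Finset.mem_union, Finset.mem_image, mem_TCC]
    constructor
    · rintro ⟨hA, hs, hc⟩
      by_cases hh : l.head? = some a
      · right
        cases l with
        | nil => simp at hh
        | cons x t =>
          simp only [List.head?_cons, Option.some_inj] at hh
          subst hh
          obtain ⟨hno, hct⟩ := List.isChain_cons.mp hc
          simp only [List.sum_cons] at hs
          refine ⟨t, ⟨⟨fun y hy => hA y (List.mem_cons_of_mem _ hy), by omega, hct⟩, ?_⟩, rfl⟩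
          intro hht
          exact hno a hht rfl
      · exact Or.inl ⟨⟨hA, hs, hc⟩, hh⟩
    · rintro (⟨hl, -⟩ | ⟨t, ⟨⟨hA, hs, hc⟩, hh⟩, rfl⟩)
      · exact hl
      · refine ⟨?_, ?_, ?_⟩
        · intro x hx
          rcases List.mem_cons.mp hx with rfl | hx
          · exact ⟨j, rfl⟩
          · exact hA x hx
        · simp only [List.sum_cons]; omega
        · refine List.isChain_cons.mpr ⟨?_, hc⟩
          intro y hy hay
          subst hay
          exact hh hy
  have hdisj : Disjoint (TCC m a) ((TCC (m - a) a).image (a :: ·)) := by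
    rw [Finset.disjoint_left]
    rintro l hl hl2
    obtain ⟨t, -, rfl⟩ := Finset.mem_image.mp hl2
    exact (mem_TCC.mp hl).2 rfl
  have hinj : Function.Injective (a :: · : List ℕ → List ℕ) := fun x y hxy => by
    simpa using hxy
  rw [cl, key, Finset.card_union_of_disjoint hdisj, Finset.card_image_of_injective _ hinj]
  rfl

lemma cl_first_nat {m : ℕ} (hm : 0 < m) :
    cl m = ∑ j ∈ Finset.range (m + 1), if 2 ^ j ≤ m then cc (m - 2 ^ j) (2 ^ j) else 0 := by
  have key : TL m = (Finset.range (m + 1)).biUnion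
      (fun j => if 2 ^ j ≤ m then (TCC (m - 2 ^ j) (2 ^ j)).image ((2 ^ j) :: ·) else ∅) := by
    ext l
    simp only [Finset.mem_biUnion, Finset.mem_range]
    constructor
    · intro hl
      obtain ⟨hA, hs, hc⟩ := mem_TL.mp hl
      cases l with
      | nil => simp only [List.sum_nil] at hs; omega
      | cons x t =>
        obtain ⟨i, rfl⟩ := hA _ List.mem_cons_self
        simp only [List.sum_cons] at hs
        have h2 : 2 ^ i ≤ m := by omega
        have hi : i < m + 1 := by have := @Nat.lt_two_pow_self i; omega
        refine ⟨i, hi, ?_⟩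
        rw [if_pos h2]
        refine Finset.mem_image.mpr ⟨t, mem_TCC.mpr ⟨⟨fun y hy => hA y (List.mem_cons_of_mem _ hy),
          by omega, (List.isChain_cons.mp hc).2⟩, ?_⟩, rfl⟩
        intro hht
        exact (List.isChain_cons.mp hc).1 _ hht rfl
    · rintro ⟨j, -, hj⟩
      by_cases h2 : 2 ^ j ≤ m
      · rw [if_pos h2] at hj
        obtain ⟨t, ht, rfl⟩ := Finset.mem_image.mp hj
        obtain ⟨⟨hA, hs, hc⟩, hh⟩ := mem_TCC.mp ht
        refine mem_TL.mpr ⟨?_, ?_, ?_⟩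
        · intro x hx
          rcases List.mem_cons.mp hx with rfl | hx
          · exact ⟨j, rfl⟩
          · exact hA x hx
        · simp only [List.sum_cons]; omega
        · refine List.isChain_cons.mpr ⟨?_, hc⟩
          intro y hy hay; subst hay; exact hh hy
      · rw [if_neg h2] at hj; simp at hj
  have hdisj : ∀ i ∈ Finset.range (m + 1), ∀ j ∈ Finset.range (m + 1), i ≠ j →
      Disjoint (if 2 ^ i ≤ m then (TCC (m - 2 ^ i) (2 ^ i)).image ((2 ^ i) :: ·) else ∅)
        (if 2 ^ j ≤ m then (TCC (m - 2 ^ j) (2 ^ j)).image ((2 ^ j) :: ·) else ∅) := by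
    intro i _ j _ hij
    split_ifs with h1 h2 h2
    · rw [Finset.disjoint_left]
      rintro l hl1 hl2
      obtain ⟨t1, -, rfl⟩ := Finset.mem_image.mp hl1
      obtain ⟨t2, -, he⟩ := Finset.mem_image.mp hl2
      have : 2 ^ j = 2 ^ i := by
        have := congrArg List.head? he
        simpa using this
      exact hij (Nat.pow_right_injective le_rfl this.symm)
    all_goals simp
  rw [cl, key, Finset.card_biUnion hdisj]
  refine Finset.sum_congr rfl fun j hj => ?_
  split_ifs with h2
  · rw [Finset.card_image_of_injective _ (fun x y hxy => by simpa using hxy : Function.Injective ((2^j) :: · : List ℕ → List ℕ))]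
    rfl
  · simp

lemma cl_first {m : ℕ} (hm : 0 < m) :
    (cl m : ℤ) = ∑ j ∈ Finset.range (m + 1),
      (if 2 ^ j ≤ m then (cc (m - 2 ^ j) (2 ^ j) : ℤ) else 0) := by
  rw [cl_first_nat hm]
  push_cast [apply_ite (Nat.cast : ℕ → ℤ)]
  rfl

lemma ccQ : ∀ m j : ℕ, (cc m (2 ^ j) : ℤ) = ∑ k ∈ Finset.range (m + 1),
    (if 2 ^ j ∣ (m - k) then (-1 : ℤ) ^ ((m - k) / 2 ^ j) else 0) * cl k := by
  intro m
  induction m using Nat.strong_induction_on with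
  | _ m IH =>
    intro j
    have hpow : 1 ≤ 2 ^ j := Nat.one_le_two_pow
    by_cases h : 2 ^ j ≤ m
    · have hsplit : (cl m : ℤ) = cc m (2 ^ j) + cc (m - 2 ^ j) (2 ^ j) := by
        exact_mod_cast congrArg (Nat.cast : ℕ → ℤ) (cl_split j h)
      have h1 : (cc m (2 ^ j) : ℤ) = cl m - cc (m - 2 ^ j) (2 ^ j) := by linarith
      rw [h1, IH (m - 2 ^ j) (by omega) j]
      conv_rhs => rw [Finset.sum_range_succ]
      have hlast : (if 2 ^ j ∣ (m - m) then (-1 : ℤ) ^ ((m - m) / 2 ^ j) else 0) * cl m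
          = cl m := by simp
      rw [hlast]
      have hsub : ∑ k ∈ Finset.range m,
            (if 2 ^ j ∣ (m - k) then (-1 : ℤ) ^ ((m - k) / 2 ^ j) else 0) * cl k
          = ∑ k ∈ Finset.range (m - 2 ^ j + 1),
            (if 2 ^ j ∣ (m - k) then (-1 : ℤ) ^ ((m - k) / 2 ^ j) else 0) * cl k := by
        refine (Finset.sum_subset (Finset.range_subset_range.mpr (by omega)) ?_).symm
        intro k hk1 hk2
        simp only [Finset.mem_range] at hk1 hk2
        rw [if_neg, zero_mul]
        intro hdvd
        have := Nat.le_of_dvd (by omega) hdvd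
        omega
      rw [hsub]
      have hpt : ∀ k ∈ Finset.range (m - 2 ^ j + 1),
          (if 2 ^ j ∣ (m - k) then (-1 : ℤ) ^ ((m - k) / 2 ^ j) else 0) * cl k
          = -((if 2 ^ j ∣ (m - 2 ^ j - k) then (-1 : ℤ) ^ ((m - 2 ^ j - k) / 2 ^ j) else 0) * cl k) := by
        intro k hk
        simp only [Finset.mem_range] at hk
        have he : m - k = (m - 2 ^ j - k) + 2 ^ j := by omega
        rw [he]
        have hdvd : 2 ^ j ∣ (m - 2 ^ j - k) + 2 ^ j ↔ 2 ^ j ∣ (m - 2 ^ j - k) :=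
          Nat.dvd_add_self_right
        have hdiv : ((m - 2 ^ j - k) + 2 ^ j) / 2 ^ j = (m - 2 ^ j - k) / 2 ^ j + 1 :=
          Nat.add_div_right _ (by omega)
        by_cases hd : 2 ^ j ∣ (m - 2 ^ j - k)
        · rw [if_pos (hdvd.mpr hd), if_pos hd, hdiv, pow_succ]
          ring
        · rw [if_neg (fun hc => hd (hdvd.mp hc)), if_neg hd]
          ring
      rw [Finset.sum_congr rfl hpt, Finset.sum_neg_distrib]
      ring
    · rw [cc_of_gt (by omega)]
      symm
      rw [Finset.sum_eq_single_of_mem m (Finset.self_mem_range_succ m)]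
      · simp
      · intro k hk hkm
        simp only [Finset.mem_range] at hk
        rw [if_neg, zero_mul]
        intro hdvd
        have := Nat.le_of_dvd (by omega) hdvd
        omega

def co (m k j : ℕ) : ℤ :=
  if 2 ^ j + k ≤ m ∧ 2 ^ j ∣ (m - k) then (-1 : ℤ) ^ ((m - k) / 2 ^ j - 1) else 0

lemma coV {m k : ℕ} (h : k < m) :
    ∑ j ∈ Finset.range (m + 1), co m k j = 1 - (v2 (m - k) : ℤ) := by
  set r := m - k with hr
  have hr1 : 1 ≤ r := by omega
  set v := v2 r with hv
  set s := r / 2 ^ v with hs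
  have hrs : 2 ^ v * s = r := Nat.ordProj_mul_ordCompl_eq_self r 2
  have hsodd : ¬ 2 ∣ s := Nat.not_dvd_ordCompl Nat.prime_two (by omega)
  have hdvd_iff : ∀ j : ℕ, 2 ^ j ∣ r ↔ j ≤ v := by
    intro j
    rw [hv, v2, ← Nat.Prime.pow_dvd_iff_le_factorization Nat.prime_two (by omega)]
  have hvr : v < r := by
    have h1 : 2 ^ v ∣ r := (hdvd_iff v).mpr le_rfl
    have h2 := Nat.le_of_dvd (by omega) h1
    have := @Nat.lt_two_pow_self v
    omega
  have hco : ∀ j : ℕ, co m k j = if j ≤ v then (if j = v then 1 else -1) else 0 := by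
    intro j
    rw [co, ← hr]
    by_cases hj : j ≤ v
    · have hd : 2 ^ j ∣ r := (hdvd_iff j).mpr hj
      have hle : 2 ^ j ≤ r := Nat.le_of_dvd (by omega) hd
      rw [if_pos ⟨by omega, hd⟩, if_pos hj]
      have hq : r / 2 ^ j = 2 ^ (v - j) * s := by
        have : r = 2 ^ j * (2 ^ (v - j) * s) := by
          rw [← mul_assoc, ← pow_add]
          rw [show j + (v - j) = v by omega]
          omega
        rw [this, Nat.mul_div_cancel_left _ (by positivity)]
      by_cases hjv : j = v
      · rw [if_pos hjv]
        subst hjv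
        rw [hq]
        simp only [Nat.sub_self, pow_zero, one_mul]
        have : Even (s - 1) := by
          rcases Nat.even_or_odd s with he | ho
          · exact absurd he.two_dvd hsodd
          · exact Nat.Odd.sub_odd ho odd_one
        exact this.neg_one_pow
      · rw [if_neg hjv]
        have hrq : Odd (2 ^ (v - j) * s - 1) := by
          have he : Even (2 ^ (v - j) * s) := by
            have : (2 : ℕ) ∣ 2 ^ (v - j) := dvd_pow_self 2 (by omega)
            exact (this.mul_right s).elim fun c hc => ⟨c, by omega⟩
          have hs0 : 0 < s := by
            rcases Nat.eq_zero_or_pos s with h0 | h0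
            · omega
            · exact h0
          have hpos : 1 ≤ 2 ^ (v - j) * s := by
            have h2p : 0 < 2 ^ (v - j) := by positivity
            exact Nat.one_le_iff_ne_zero.mpr (by positivity)
          exact Nat.Even.sub_odd hpos he odd_one
        rw [hq, hrq.neg_one_pow]
    · rw [if_neg hj, if_neg ?_]
      rintro ⟨-, hd⟩
      exact hj ((hdvd_iff j).mp hd)
  calc ∑ j ∈ Finset.range (m + 1), co m k j
      = ∑ j ∈ Finset.range (m + 1), if j ≤ v then (if j = v then (1 : ℤ) else -1) else 0 :=
        Finset.sum_congr rfl fun j _ => hco j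
    _ = ∑ j ∈ Finset.range (v + 1), if j ≤ v then (if j = v then (1 : ℤ) else -1) else 0 := by
        refine (Finset.sum_subset (Finset.range_subset_range.mpr (by omega)) ?_).symm
        intro j hj1 hj2
        simp only [Finset.mem_range] at hj1 hj2
        rw [if_neg (by omega)]
    _ = ∑ j ∈ Finset.range (v + 1), ((if j = v then (2 : ℤ) else 0) - 1) := by
        refine Finset.sum_congr rfl fun j hj => ?_
        simp only [Finset.mem_range] at hj
        rw [if_pos (by omega)]
        split_ifs <;> ring
    _ = 1 - (v : ℤ) := by
        rw [Finset.sum_sub_distrib, Finset.sum_ite_eq' (Finset.range (v + 1)) v,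
          if_pos (Finset.self_mem_range_succ v)]
        simp
        ring

lemma star {m : ℕ} (hm : 0 < m) :
    (cl m : ℤ) = ∑ k ∈ Finset.range m, (1 - (v2 (m - k) : ℤ)) * cl k := by
  have hB : (cl m : ℤ) = ∑ j ∈ Finset.range (m + 1), ∑ k ∈ Finset.range (m + 1),
      co m k j * cl k := by
    rw [cl_first hm]
    refine Finset.sum_congr rfl fun j _ => ?_
    by_cases h2 : 2 ^ j ≤ m
    · rw [if_pos h2, ccQ (m - 2 ^ j) j]
      have hpow : 1 ≤ 2 ^ j := Nat.one_le_two_pow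
      refine Eq.symm ?_
      calc ∑ k ∈ Finset.range (m + 1), co m k j * cl k
          = ∑ k ∈ Finset.range (m - 2 ^ j + 1), co m k j * cl k := by
            refine (Finset.sum_subset (Finset.range_subset_range.mpr (by omega)) ?_).symm
            intro k hk1 hk2
            simp only [Finset.mem_range] at hk1 hk2
            rw [co, if_neg, zero_mul]
            rintro ⟨hle, -⟩
            omega
        _ = ∑ k ∈ Finset.range (m - 2 ^ j + 1),
              (if 2 ^ j ∣ (m - 2 ^ j - k) then (-1 : ℤ) ^ ((m - 2 ^ j - k) / 2 ^ j) else 0)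
                * cl k := by
            refine Finset.sum_congr rfl fun k hk => ?_
            simp only [Finset.mem_range] at hk
            have he : m - k = (m - 2 ^ j - k) + 2 ^ j := by omega
            rw [co, he]
            have hdvd : 2 ^ j ∣ (m - 2 ^ j - k) + 2 ^ j ↔ 2 ^ j ∣ (m - 2 ^ j - k) :=
              Nat.dvd_add_self_right
            have hdiv : ((m - 2 ^ j - k) + 2 ^ j) / 2 ^ j - 1 = (m - 2 ^ j - k) / 2 ^ j := by
              rw [Nat.add_div_right _ (by omega)]
              simp
            by_cases hd : 2 ^ j ∣ (m - 2 ^ j - k)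
            · rw [if_pos ⟨by omega, hdvd.mpr hd⟩, if_pos hd, hdiv]
            · rw [if_neg (fun hc => hd (hdvd.mp hc.2)), if_neg hd]
    · rw [if_neg h2]
      refine (Finset.sum_eq_zero fun k _ => ?_).symm
      rw [co, if_neg, zero_mul]
      rintro ⟨hle, -⟩
      omega
  rw [hB, Finset.sum_comm]
  have hsplit : ∑ k ∈ Finset.range (m + 1), ∑ j ∈ Finset.range (m + 1), co m k j * cl k
      = ∑ k ∈ Finset.range m, ∑ j ∈ Finset.range (m + 1), co m k j * cl k := by
    rw [Finset.sum_range_succ]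
    have : ∑ j ∈ Finset.range (m + 1), co m m j * cl m = 0 := by
      refine Finset.sum_eq_zero fun j _ => ?_
      rw [co, if_neg, zero_mul]
      rintro ⟨hle, -⟩
      have : 1 ≤ 2 ^ j := Nat.one_le_two_pow
      omega
    rw [this, add_zero]
  rw [hsplit]
  refine Finset.sum_congr rfl fun k hk => ?_
  simp only [Finset.mem_range] at hk
  rw [← Finset.sum_mul, coV hk]

lemma hw_rec {n : ℕ} (hn : 0 < n) : hw n = n % 2 + hw (n / 2) := by
  rw [hw, Nat.digits_def' (by norm_num : 1 < 2) hn]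
  rfl

lemma v2_two_mul {t : ℕ} (ht : 0 < t) : v2 (2 * t) = v2 t + 1 := by
  rw [v2, v2, Nat.factorization_mul (by norm_num) (by omega)]
  simp [Nat.Prime.factorization Nat.prime_two]
  ring

lemma v2_odd {t : ℕ} (ht : ¬ 2 ∣ t) : v2 t = 0 := by
  rw [v2, Nat.factorization_eq_zero_of_not_dvd ht]

lemma hw_step : ∀ t : ℕ, 1 ≤ t → hw (t - 1) + 1 = hw t + v2 t := by
  intro t
  induction t using Nat.strong_induction_on with
  | _ t IH =>
    intro ht
    rcases Nat.even_or_odd t with ⟨u, hu⟩ | ⟨u, hu⟩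
    · -- t = 2u, u ≥ 1
      have hu1 : 1 ≤ u := by omega
      have h2u : t = 2 * u := by omega
      have hwt : hw t = hw u := by
        rw [hw_rec (by omega)]
        have h1 : t % 2 = 0 := by omega
        have h2 : t / 2 = u := by omega
        rw [h1, h2, Nat.zero_add]
      have hv : v2 t = v2 u + 1 := by rw [h2u, v2_two_mul hu1]
      have hodd : hw (t - 1) = 1 + hw (u - 1) := by
        rw [hw_rec (by omega : 0 < t - 1)]
        have h1 : (t - 1) % 2 = 1 := by omega
        have h2 : (t - 1) / 2 = u - 1 := by omega
        rw [h1, h2]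
      have := IH u (by omega) hu1
      omega
    · -- t = 2u + 1
      have hwt : hw t = 1 + hw u := by
        rw [hw_rec (by omega)]
        have h1 : t % 2 = 1 := by omega
        have h2 : t / 2 = u := by omega
        rw [h1, h2]
      have hv : v2 t = 0 := v2_odd (by omega)
      have hprev : hw (t - 1) = hw u := by
        rcases Nat.eq_zero_or_pos u with rfl | hu1
        · have : t = 1 := by omega
          subst this
          rfl
        · rw [hw_rec (by omega : 0 < t - 1)]
          have h1 : (t - 1) % 2 = 0 := by omega
          have h2 : (t - 1) / 2 = u := by omega
          rw [h1, h2, Nat.zero_add]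
      omega

lemma mainP (n : ℕ) :
    ∑ k ∈ Finset.range (n + 1), (cl k : ℤ) * (1 - (hw (n - k) : ℤ)) = 1 := by
  induction n with
  | zero => simp [cl_zero, hw]
  | succ n IHn =>
    rw [Finset.sum_range_succ]
    have h2 : ∀ k ∈ Finset.range (n + 1),
        (cl k : ℤ) * (1 - (hw (n + 1 - k) : ℤ))
          = (cl k : ℤ) * (1 - (hw (n - k) : ℤ)) - (1 - (v2 (n + 1 - k) : ℤ)) * cl k := by
      intro k hk
      simp only [Finset.mem_range] at hk
      have ht : 1 ≤ n + 1 - k := by omega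
      have hstep := hw_step (n + 1 - k) ht
      have hprev : n + 1 - k - 1 = n - k := by omega
      rw [hprev] at hstep
      have he : (hw (n + 1 - k) : ℤ) = (hw (n - k) : ℤ) + 1 - (v2 (n + 1 - k) : ℤ) := by
        zify at hstep
        linarith
      rw [he]
      ring
    rw [Finset.sum_congr rfl h2, Finset.sum_sub_distrib, IHn, ← star (by omega : 0 < n + 1)]
    simp [hw]

theorem stmt18 (n : ℕ) (hn : 0 < n) :
    ∑ k ∈ Finset.range (n + 1), (clA binA k : ℤ) * (1 - (hw (n - k) : ℤ)) = 1 := by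
  simp only [clA_eq_cl]
  exact mainP n
end
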